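/- Let X ⊆ ℝⁿ, T > 0, X₀, X_T ⊆ X, and let f : [0,T] × ℝⁿ → ℝⁿ. Suppose B : [0,T] × ℝⁿ → ℝ is continuously differentiable and satisfies: (i) B(T, z) - B(0, x₀) > 0 for all z ∈ X_T and x₀ ∈ X₀; (ii) ∂ₓB(t,x) · f(t,x) + ∂ₜB(t,x) ≤ 0 for all t ∈ [0,T] and x ∈ X. Then there is no solution x : [0,T] → X of the ODE ẋ = f(t,x) with x(0) ∈ X₀ and x(T) ∈ X_T. -/

import Mathlib

open Set

section BarrierAlongCurve

variable {E : Type*} [NormedAddCommGroup E] [NormedSpace ℝ E]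

theorem hasDerivAt_comp_graph {B : ℝ × E → ℝ} {x : ℝ → E} {v : E} {t : ℝ}
    (hB : DifferentiableAt ℝ B (t, x t)) (hx : HasDerivAt x v t) :
    HasDerivAt (fun s => B (s, x s)) (fderiv ℝ B (t, x t) (1, v)) t :=
  hB.hasFDerivAt.comp_hasDerivAt t ((hasDerivAt_id t).prodMk hx)

theorem antitoneOn_comp_graph_of_fderiv_nonpos {B : ℝ × E → ℝ} {x x' : ℝ → E} {a b : ℝ}
    (hB : ∀ t ∈ Icc a b, DifferentiableAt ℝ B (t, x t))
    (hx : ∀ t ∈ Icc a b, HasDerivAt x (x' t) t)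
    (hB_nonpos : ∀ t ∈ Icc a b, fderiv ℝ B (t, x t) (1, x' t) ≤ 0) :
    AntitoneOn (fun t => B (t, x t)) (Icc a b) := by
  have hderiv : ∀ t ∈ Icc a b,
      HasDerivAt (fun s => B (s, x s)) (fderiv ℝ B (t, x t) (1, x' t)) t :=
    fun t ht => hasDerivAt_comp_graph (hB t ht) (hx t ht)
  exact antitoneOn_of_hasDerivWithinAt_nonpos (convex_Icc a b) (HasDerivAt.continuousOn hderiv)
    (fun t ht => (hderiv t (interior_subset ht)).hasDerivWithinAt)
    (fun t ht => hB_nonpos t (interior_subset ht))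

end BarrierAlongCurve

theorem stmt_1_general {n : ℕ} (X X0 XT : Set (Fin n → ℝ)) (T : ℝ) (hT : 0 < T)
    (f : ℝ → (Fin n → ℝ) → (Fin n → ℝ))
    (B : ℝ × (Fin n → ℝ) → ℝ) (hB : ContDiff ℝ 1 B)
    (h1 : ∀ z ∈ XT, ∀ x0 ∈ X0, 0 < B (T, z) - B (0, x0))
    (h2 : ∀ t ∈ Set.Icc (0:ℝ) T, ∀ x ∈ X, fderiv ℝ B (t, x) (1, f t x) ≤ 0) :
    ¬ ∃ x : ℝ → (Fin n → ℝ), ContDiff ℝ 1 x ∧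
        (∀ t ∈ Set.Icc (0:ℝ) T, x t ∈ X) ∧
        (∀ t ∈ Set.Icc (0:ℝ) T, HasDerivAt x (f t (x t)) t) ∧
        x 0 ∈ X0 ∧ x T ∈ XT := by
  rintro ⟨x, -, hxX, hode, hx0, hxT⟩
  have hanti := antitoneOn_comp_graph_of_fderiv_nonpos
    (fun t _ => hB.differentiable one_ne_zero _) hode
    fun t ht => h2 t ht (x t) (hxX t ht)
  have hdecrease : B (T, x T) ≤ B (0, x 0) :=
    hanti (left_mem_Icc.2 hT.le) (right_mem_Icc.2 hT.le) hT.le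
  linarith [h1 (x T) hxT (x 0) hx0]

theorem stmt_1 {n : ℕ} (X X0 XT : Set (Fin n → ℝ)) (T : ℝ) (hT : 0 < T)
    (hX0 : X0 ⊆ X) (hXT : XT ⊆ X)
    (f : ℝ → (Fin n → ℝ) → (Fin n → ℝ))
    (B : ℝ × (Fin n → ℝ) → ℝ) (hB : ContDiff ℝ 1 B)
    (h1 : ∀ z ∈ XT, ∀ x0 ∈ X0, 0 < B (T, z) - B (0, x0))
    (h2 : ∀ t ∈ Set.Icc (0:ℝ) T, ∀ x ∈ X, fderiv ℝ B (t, x) (1, f t x) ≤ 0) :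
    ¬ ∃ x : ℝ → (Fin n → ℝ), ContDiff ℝ 1 x ∧
        (∀ t ∈ Set.Icc (0:ℝ) T, x t ∈ X) ∧
        (∀ t ∈ Set.Icc (0:ℝ) T, HasDerivAt x (f t (x t)) t) ∧
        x 0 ∈ X0 ∧ x T ∈ XT :=
  stmt_1_general X X0 XT T hT f B hB h1 h2
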